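/- Let S, v be traceless anti-Hermitian 2×2 complex matrices and r ∈ ℝ, and suppose σ := S - v - r𝕀 is invertible. Define v' := σ·v·σ⁻¹ and S̃ := σ·S·σ⁻¹. Then v + S̃ = S + v' and r(S̃ - S) = v'·S - S̃·v; that is, the conjugations by σ solve the doubly discrete isotropic Heisenberg magnet zero curvature equations. -/
import Mathlib


open Matrix

noncomputable section

/-- Conjugation by `σ = S - v - r𝕀` solves the doubly discrete isotropic Heisenberg
magnet zero curvature equations. -/
theorem ddIHM_conjugation_solves (S v : Matrix (Fin 2) (Fin 2) ℂ) (r : ℝ)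
    (hStr : Matrix.trace S = 0) (hSah : Sᴴ = -S)
    (hvtr : Matrix.trace v = 0) (hvah : vᴴ = -v)
    (hσ : IsUnit (S - v - r • (1 : Matrix (Fin 2) (Fin 2) ℂ))) :
    let σ := S - v - r • (1 : Matrix (Fin 2) (Fin 2) ℂ)
    let v' := σ * v * σ⁻¹
    let St := σ * S * σ⁻¹
    v + St = S + v' ∧ r • (St - S) = v' * S - St * v := by
  intro σ v' St
  have hdet : IsUnit σ.det := (Matrix.isUnit_iff_isUnit_det _).mp hσ
  have h1 : σ * σ⁻¹ = 1 := Matrix.mul_nonsing_inv _ hdet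
  have h2 : σ⁻¹ * σ = 1 := Matrix.nonsing_inv_mul _ hdet
  have hσdef : σ = S - v - r • 1 := rfl
  set D := v * S - S * v with hD
  set u := σ⁻¹ with hu
  -- commutation facts
  have hv : v * σ = σ * v + D := by
    rw [hσdef, hD]
    simp only [mul_sub, sub_mul, mul_smul_comm, smul_mul_assoc, smul_sub, smul_add,
      mul_one, one_mul]
    abel
  have hS : S * σ = σ * S + D := by
    rw [hσdef, hD]
    simp only [mul_sub, sub_mul, mul_smul_comm, smul_mul_assoc, smul_sub, smul_add,
      mul_one, one_mul]
    abel
  -- conjugation facts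
  have hvc : u * v * σ = v + u * D := by
    rw [Matrix.mul_assoc, hv, mul_add, ← Matrix.mul_assoc, h2, one_mul]
  have hSc : u * S * σ = S + u * D := by
    rw [Matrix.mul_assoc, hS, mul_add, ← Matrix.mul_assoc, h2, one_mul]
  constructor
  · -- v + St = S + v'
    have key : St - v' = S - v := by
      have e : St - v' = σ * (S - v) * u := by
        show σ * S * u - σ * v * u = _
        rw [mul_sub σ S v, sub_mul (σ * S) (σ * v) u]
      rw [e]
      have hcomm : σ * (S - v) = (S - v) * σ := by
        rw [hσdef]
        simp only [mul_sub, sub_mul, mul_smul_comm, smul_mul_assoc, smul_sub, smul_add,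
          mul_one, one_mul]
        abel
      rw [hcomm, Matrix.mul_assoc, h1, mul_one]
    calc v + St = v + (v' + (St - v')) := by abel
    _ = v + (v' + (S - v)) := by rw [key]
    _ = S + v' := by abel
  · -- second equation
    have hSu : σ⁻¹ * S = (S + u * D) * u := by
      rw [← hSc, Matrix.mul_assoc, h1, mul_one]
    have hvu : σ⁻¹ * v = (v + u * D) * u := by
      rw [← hvc, Matrix.mul_assoc, h1, mul_one]
    have hrhs : v' * S - St * v = -(r • (D * u)) := by
      have e1 : v' * S = σ * (v * ((S + u * D) * u)) := by
        show σ * v * σ⁻¹ * S = _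
        rw [Matrix.mul_assoc, Matrix.mul_assoc, hSu]
      have e2 : St * v = σ * (S * ((v + u * D) * u)) := by
        show σ * S * σ⁻¹ * v = _
        rw [Matrix.mul_assoc, Matrix.mul_assoc, hvu]
      rw [e1, e2, ← mul_sub]
      have inner : v * ((S + u * D) * u) - S * ((v + u * D) * u)
          = (D + (v - S) * (u * D)) * u := by
        simp only [mul_add, add_mul, sub_mul, mul_sub, Matrix.mul_assoc, hD]
        abel
      rw [inner]
      have hvS : (v - S) * (u * D) = -(D) - r • (u * D) := by
        have hvs : v - S = -(σ + r • 1) := by rw [hσdef]; abel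
        rw [hvs, neg_mul, add_mul, smul_mul_assoc, one_mul, ← Matrix.mul_assoc, h1, one_mul]
        abel
      rw [hvS]
      have e3 : D + (-(D) - r • (u * D)) = -(r • (u * D)) := by abel
      rw [e3, neg_mul, mul_neg, smul_mul_assoc, mul_smul_comm,
        Matrix.mul_assoc u D u, ← Matrix.mul_assoc σ u (D * u), h1, one_mul]
    have hlhs : r • (St - S) = -(r • (D * u)) := by
      have e : St - S = (σ * S - S * σ) * u := by
        show σ * S * u - S = _
        rw [sub_mul (σ * S) (S * σ) u]
        congr 1
        rw [Matrix.mul_assoc, h1, mul_one]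
      rw [e]
      have e2 : σ * S - S * σ = -D := by rw [hS]; abel
      rw [e2, neg_mul, smul_neg]
    rw [hlhs, hrhs]
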